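/- arXiv:2009.03641 — 3 statements merged into one kernel-verified Lean document; each statement's English description precedes it below -/
import Mathlib

section
/- For n ≥ 4, the perfect number N(n,2) satisfies: N(n,2) = t² − t if n = 2t, and N(n,2) = t² if n = 2t+1. Equivalently, a minimum-size upper perfect subset T of 2-element subsets of an n-set (meaning every 3-element subset of the n-set contains some member of T) that is also lower perfect (every singleton is contained in some member of T) has cardinality t²−t when n=2t and t² when n=2t+1. -/
/-!
A family `T` of pairs is the edge set of a graph `G`, and `T` is upper perfect exactly when the
complement `Gᶜ` is triangle-free. By Mantel's theorem (Turán's theorem for `r = 2`) `Gᶜ` has at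
most `⌊n²/4⌋` edges, so `|T| ≥ C(n,2) - ⌊n²/4⌋`. Equality holds for the complement of the
complete bipartite Turán graph, i.e. two disjoint cliques on `⌊n/2⌋` and `⌈n/2⌉` vertices; for
`n ≥ 4` both cliques have an edge, so this family is also lower perfect.
-/

/-- `perfectNum n` is the `(n,2)`-th perfect number `N(n,2)`: the minimum cardinality
of a perfect subset of the 2-element subsets of an `n`-set, i.e. of a family `T` of
2-subsets that is upper perfect (every 3-subset contains a member of `T`) and lower
perfect (every vertex lies in a member of `T`). -/
noncomputable def perfectNum (n : ℕ) : ℕ :=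
  sInf {k : ℕ | ∃ T : Finset (Finset (Fin n)),
    (∀ e ∈ T, e.card = 2) ∧
    (∀ s : Finset (Fin n), s.card = 3 → ∃ e ∈ T, e ⊆ s) ∧
    (∀ v : Fin n, ∃ e ∈ T, v ∈ e) ∧
    T.card = k}

open Finset SimpleGraph

theorem Nat.choose_two_two_mul (t : ℕ) : (2 * t).choose 2 = t ^ 2 - t + (2 * t) ^ 2 / 4 := by
  rw [show (2 * t) ^ 2 / 4 = t ^ 2 by ring_nf; omega]
  qify [Nat.le_self_pow two_ne_zero t]
  rw [Nat.cast_choose_two]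
  push_cast
  ring

theorem Nat.choose_two_two_mul_add_one (t : ℕ) :
    (2 * t + 1).choose 2 = t ^ 2 + (2 * t + 1) ^ 2 / 4 := by
  rw [show (2 * t + 1) ^ 2 / 4 = t ^ 2 + t by ring_nf; omega]
  qify
  rw [Nat.cast_choose_two]
  push_cast
  ring

theorem Sym2.toFinset_injective {α : Type*} [DecidableEq α] :
    Function.Injective (Sym2.toFinset : Sym2 α → Finset α) :=
  fun _ _ h => Sym2.ext fun x => by rw [← Sym2.mem_toFinset, h, Sym2.mem_toFinset]

structure IsPerfectPairFamily {V : Type*} (T : Finset (Finset V)) : Prop where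
  card_eq_two : ∀ e ∈ T, #e = 2
  exists_subset : ∀ s : Finset V, #s = 3 → ∃ e ∈ T, e ⊆ s
  exists_mem : ∀ v, ∃ e ∈ T, v ∈ e

namespace SimpleGraph

variable {V : Type*} [DecidableEq V]

theorem card_edgeFinset_turanGraph_two (n : ℕ) : #(turanGraph n 2).edgeFinset = n ^ 2 / 4 := by
  rw [card_edgeFinset_turanGraph, Nat.choose_eq_zero_of_lt (Nat.mod_lt n two_pos), add_zero]
  rcases Nat.even_or_odd' n with ⟨t, rfl | rfl⟩
  · rw [Nat.mul_mod_right]; ring_nf; omega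
  · rw [Nat.mul_add_mod_self_left]; ring_nf; omega

theorem card_edgeFinset_add_card_edgeFinset_compl [Fintype V] (G : SimpleGraph V)
    [DecidableRel G.Adj] : #G.edgeFinset + #Gᶜ.edgeFinset = (Fintype.card V).choose 2 := by
  have hcompl : Gᶜ.edgeFinset = (⊤ : SimpleGraph V).edgeFinset \ G.edgeFinset := by
    ext ⟨a, b⟩
    simp
  have hle := card_le_card (edgeFinset_mono (le_top : G ≤ ⊤))
  rw [← card_edgeFinset_top_eq_card_choose_two, hcompl,
    card_sdiff_of_subset (edgeFinset_mono le_top)]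
  omega

def edgePairs (G : SimpleGraph V) [Fintype G.edgeSet] : Finset (Finset V) :=
  G.edgeFinset.image Sym2.toFinset

section EdgePairs

variable (G : SimpleGraph V) [Fintype G.edgeSet]

theorem card_edgePairs : #G.edgePairs = #G.edgeFinset :=
  card_image_of_injective _ Sym2.toFinset_injective

theorem mem_edgePairs {e : Finset V} : e ∈ G.edgePairs ↔ ∃ a b, G.Adj a b ∧ e = {a, b} := by
  simp only [edgePairs, mem_image, Sym2.exists, mem_edgeFinset, mem_edgeSet, Sym2.toFinset_mk_eq]
  grind

theorem card_eq_two_of_mem_edgePairs {e : Finset V} (he : e ∈ G.edgePairs) : #e = 2 := by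
  obtain ⟨a, b, hab, rfl⟩ := G.mem_edgePairs.mp he
  exact card_pair hab.ne

theorem exists_mem_edgePairs_subset_iff {s : Finset V} :
    (∃ e ∈ G.edgePairs, e ⊆ s) ↔ ¬G.IsIndepSet s := by
  simp only [mem_edgePairs, isIndepSet_iff, Set.Pairwise]
  constructor
  · rintro ⟨_, ⟨a, b, hab, rfl⟩, hs⟩ hind
    exact hind (hs (mem_insert_self a _)) (hs (mem_insert_of_mem (mem_singleton_self b))) hab.ne hab
  · intro hind
    push Not at hind
    obtain ⟨a, ha, b, hb, -, hab⟩ := hind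
    exact ⟨_, ⟨a, b, hab, rfl⟩, insert_subset ha (singleton_subset_iff.mpr hb)⟩

theorem exists_mem_edgePairs_mem_iff {v : V} : (∃ e ∈ G.edgePairs, v ∈ e) ↔ ∃ w, G.Adj v w := by
  simp only [mem_edgePairs]
  constructor
  · rintro ⟨_, ⟨a, b, hab, rfl⟩, hv⟩
    rw [mem_insert, mem_singleton] at hv
    rcases hv with rfl | rfl
    exacts [⟨b, hab⟩, ⟨a, hab.symm⟩]
  · rintro ⟨w, hvw⟩
    exact ⟨_, ⟨v, w, hvw, rfl⟩, mem_insert_self v _⟩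

theorem isPerfectPairFamily_edgePairs_iff :
    IsPerfectPairFamily G.edgePairs ↔ Gᶜ.CliqueFree 3 ∧ ∀ v, ∃ w, G.Adj v w := by
  simp only [CliqueFree, isNClique_iff, isClique_compl, ← exists_mem_edgePairs_mem_iff]
  refine ⟨fun h => ⟨fun s hs => ?_, h.exists_mem⟩,
    fun h => ⟨fun _ => G.card_eq_two_of_mem_edgePairs, fun s hs => ?_, h.2⟩⟩
  · exact G.exists_mem_edgePairs_subset_iff.mp (h.exists_subset s hs.2) hs.1
  · exact G.exists_mem_edgePairs_subset_iff.mpr fun hind => h.1 s ⟨hind, hs⟩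

end EdgePairs

def ofPairs (T : Finset (Finset V)) : SimpleGraph V where
  Adj a b := a ≠ b ∧ {a, b} ∈ T
  symm := ⟨fun a b h => ⟨h.1.symm, pair_comm a b ▸ h.2⟩⟩
  loopless := ⟨fun _ h => h.1 rfl⟩

@[simp]
theorem ofPairs_adj {T : Finset (Finset V)} {a b : V} :
    (ofPairs T).Adj a b ↔ a ≠ b ∧ {a, b} ∈ T :=
  Iff.rfl

instance (T : Finset (Finset V)) : DecidableRel (ofPairs T).Adj :=
  fun _ _ => decidable_of_iff' _ ofPairs_adj

theorem edgePairs_ofPairs [Fintype V] {T : Finset (Finset V)} (hT : ∀ e ∈ T, #e = 2) :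
    (ofPairs T).edgePairs = T := by
  ext e
  rw [mem_edgePairs]
  constructor
  · rintro ⟨a, b, ⟨-, hab⟩, rfl⟩
    exact hab
  · intro he
    obtain ⟨a, b, hab, rfl⟩ := card_eq_two.mp (hT e he)
    exact ⟨a, b, ⟨hab, he⟩, rfl⟩

end SimpleGraph

theorem IsPerfectPairFamily.choose_two_le_card_add {V : Type*} [Fintype V] [DecidableEq V]
    {T : Finset (Finset V)} (hT : IsPerfectPairFamily T) :
    (Fintype.card V).choose 2 ≤ #T + Fintype.card V ^ 2 / 4 := by
  set G := ofPairs T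
  have hGT : G.edgePairs = T := edgePairs_ofPairs hT.card_eq_two
  have hfree : Gᶜ.CliqueFree 3 := (G.isPerfectPairFamily_edgePairs_iff.mp (hGT.symm ▸ hT)).1
  have hmantel : #Gᶜ.edgeFinset ≤ Fintype.card V ^ 2 / 4 := by
    have := hfree.card_edgeFinset_le (r := 2)
    dsimp only at this
    rwa [← card_edgeFinset_turanGraph, card_edgeFinset_turanGraph_two] at this
  have hsum := G.card_edgeFinset_add_card_edgeFinset_compl
  rw [← hGT, card_edgePairs]
  omega

theorem exists_adj_compl_turanGraph_two {n : ℕ} (hn : 4 ≤ n) (v : Fin n) :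
    ∃ w, (turanGraph n 2)ᶜ.Adj v w := by
  refine ⟨⟨if v + 2 < n then v + 2 else v - 2, by split <;> omega⟩, ?_⟩
  rw [compl_adj, turanGraph_adj, Ne, Fin.ext_iff]
  split <;> dsimp only <;> omega

theorem exists_isPerfectPairFamily_card_add {n : ℕ} (hn : 4 ≤ n) :
    ∃ T : Finset (Finset (Fin n)), IsPerfectPairFamily T ∧ #T + n ^ 2 / 4 = n.choose 2 := by
  refine ⟨(turanGraph n 2)ᶜ.edgePairs, ?_, ?_⟩
  · rw [isPerfectPairFamily_edgePairs_iff, compl_compl]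
    exact ⟨turanGraph_cliqueFree two_pos, exists_adj_compl_turanGraph_two hn⟩
  · have hsum := (turanGraph n 2).card_edgeFinset_add_card_edgeFinset_compl
    rw [card_edgeFinset_turanGraph_two, Fintype.card_fin] at hsum
    rw [card_edgePairs]
    omega

theorem perfectNum_add_sq_div_four {n : ℕ} (hn : 4 ≤ n) :
    perfectNum n + n ^ 2 / 4 = n.choose 2 := by
  obtain ⟨T₀, hT₀, hcard₀⟩ := exists_isPerfectPairFamily_card_add hn
  suffices perfectNum n = #T₀ by omega
  refine le_antisymm (Nat.sInf_le ⟨T₀, hT₀.1, hT₀.2, hT₀.3, rfl⟩)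
    (le_csInf ⟨_, T₀, hT₀.1, hT₀.2, hT₀.3, rfl⟩ ?_)
  rintro _ ⟨T, h₁, h₂, h₃, rfl⟩
  have := IsPerfectPairFamily.choose_two_le_card_add ⟨h₁, h₂, h₃⟩
  rw [Fintype.card_fin] at this
  omega

/-- For `n ≥ 4`, `N(n,2) = t² - t` if `n = 2t` and `N(n,2) = t²` if `n = 2t + 1`. -/
theorem stmt3 (n : ℕ) (hn : 4 ≤ n) :
    (∀ t : ℕ, n = 2 * t → perfectNum n = t ^ 2 - t) ∧
    (∀ t : ℕ, n = 2 * t + 1 → perfectNum n = t ^ 2) := by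
  have h := perfectNum_add_sq_div_four hn
  constructor
  · rintro t rfl
    rw [Nat.choose_two_two_mul] at h
    omega
  · rintro t rfl
    rw [Nat.choose_two_two_mul_add_one] at h
    omega
end

section
/- For every integer b with −C(n,2)+2 ≤ b ≤ C(n,2) − 2N(n,2) and b ≡ C(n,2) (mod 2), where n ≥ 4, there exists an upper perfect family T of 2-element subsets of {1,...,n} with |T| = (C(n,2) − b)/2 whose Stanley–Reisner complement is 1-dimensional; equivalently, there exists a quasi f-ideal of degree 2 and type (0,b) in k[x_1,...,x_n]. -/
open Finset

variable {α : Type*}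

def IsUpperPerfect (T : Finset (Finset α)) : Prop :=
  ∀ s : Finset α, s.card = 3 → ∃ e ∈ T, e ⊆ s

lemma IsUpperPerfect.mono {T T' : Finset (Finset α)} (hT : IsUpperPerfect T) (h : T ⊆ T') :
    IsUpperPerfect T' :=
  fun s hs => (hT s hs).imp fun _ ⟨he, hes⟩ => ⟨h he, hes⟩

lemma isUpperPerfect_powersetCard_two [Fintype α] :
    IsUpperPerfect ((univ : Finset α).powersetCard 2) := by
  intro s hs
  obtain ⟨e, hes, he⟩ := exists_subset_card_eq (show 2 ≤ s.card by omega)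
  exact ⟨e, mem_powersetCard.mpr ⟨subset_univ e, he⟩, hes⟩

lemma exists_perfect_card_eq_perfectNum {n : ℕ} (hn : 2 ≤ n) :
    ∃ T : Finset (Finset (Fin n)), (∀ e ∈ T, e.card = 2) ∧ IsUpperPerfect T ∧
      (∀ v : Fin n, ∃ e ∈ T, v ∈ e) ∧ T.card = perfectNum n := by
  have : Nontrivial (Fin n) := Fin.nontrivial_iff_two_le.mpr hn
  show perfectNum n ∈ {k | ∃ T : Finset (Finset (Fin n)), (∀ e ∈ T, e.card = 2) ∧
    IsUpperPerfect T ∧ (∀ v : Fin n, ∃ e ∈ T, v ∈ e) ∧ T.card = k}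
  refine Nat.sInf_mem ⟨_, univ.powersetCard 2, fun e he => (mem_powersetCard.mp he).2,
    isUpperPerfect_powersetCard_two, fun v => ?_, rfl⟩
  obtain ⟨w, hw⟩ := exists_ne v
  exact ⟨{v, w}, mem_powersetCard.mpr ⟨subset_univ _, card_pair hw.symm⟩, mem_insert_self v _⟩

lemma exists_isUpperPerfect_card_eq [Fintype α] {T₀ : Finset (Finset α)}
    (hT₀ : ∀ e ∈ T₀, e.card = 2) (hT₀up : IsUpperPerfect T₀) {t : ℕ}
    (hT₀t : T₀.card ≤ t) (ht : t < (Fintype.card α).choose 2) :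
    ∃ T : Finset (Finset α), (∀ e ∈ T, e.card = 2) ∧ IsUpperPerfect T ∧
      (∃ e : Finset α, e.card = 2 ∧ e ∉ T) ∧ T.card = t := by
  have hT₀E : T₀ ⊆ univ.powersetCard 2 :=
    fun e he => mem_powersetCard.mpr ⟨subset_univ e, hT₀ e he⟩
  have htE : t < (univ.powersetCard 2 : Finset (Finset α)).card := by
    rwa [card_powersetCard, card_univ]
  obtain ⟨T, hT₀T, hTE, rfl⟩ := exists_subsuperset_card_eq hT₀E hT₀t htE.le
  obtain ⟨e, heE, heT⟩ := exists_mem_notMem_of_card_lt_card htE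
  exact ⟨T, fun e he => (mem_powersetCard.mp (hTE he)).2, hT₀up.mono hT₀T,
    ⟨e, (mem_powersetCard.mp heE).2, heT⟩, rfl⟩

theorem stmt8_general (n : ℕ) (b : ℤ)
    (h1 : -(n.choose 2 : ℤ) + 2 ≤ b)
    (h2 : b ≤ (n.choose 2 : ℤ) - 2 * perfectNum n)
    (h3 : b % 2 = (n.choose 2 : ℤ) % 2) :
    ∃ T : Finset (Finset (Fin n)),
      (∀ e ∈ T, e.card = 2) ∧
      (∀ s : Finset (Fin n), s.card = 3 → ∃ e ∈ T, e ⊆ s) ∧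
      (∃ e : Finset (Fin n), e.card = 2 ∧ e ∉ T) ∧
      2 * (T.card : ℤ) = (n.choose 2 : ℤ) - b := by
  have hn : 2 ≤ n := by
    by_contra! hn
    have : n.choose 2 = 0 := Nat.choose_eq_zero_iff.mpr hn
    omega
  obtain ⟨T₀, hT₀, hT₀up, -, hT₀card⟩ := exists_perfect_card_eq_perfectNum hn
  obtain ⟨t, ht⟩ : ∃ t : ℕ, 2 * (t : ℤ) = n.choose 2 - b :=
    ⟨((n.choose 2 - b) / 2).toNat, by omega⟩
  obtain ⟨T, hT, hTup, hmissing, rfl⟩ := exists_isUpperPerfect_card_eq hT₀ hT₀up (t := t)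
    (by omega) (by rw [Fintype.card_fin]; omega)
  exact ⟨T, hT, hTup, hmissing, ht⟩

/-- For every integer `b` with `-C(n,2) + 2 ≤ b ≤ C(n,2) - 2N(n,2)` of the same parity
as `C(n,2)` (where `n ≥ 4`), there is an upper perfect family `T` of 2-subsets of an
`n`-set with `|T| = (C(n,2) - b)/2` whose independence complex is 1-dimensional
(some 2-subset is missing from `T`): a quasi f-ideal of degree 2 and type `(0,b)`. -/
theorem stmt8 (n : ℕ) (hn : 4 ≤ n) (b : ℤ)
    (h1 : -(n.choose 2 : ℤ) + 2 ≤ b)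
    (h2 : b ≤ (n.choose 2 : ℤ) - 2 * perfectNum n)
    (h3 : b % 2 = (n.choose 2 : ℤ) % 2) :
    ∃ T : Finset (Finset (Fin n)),
      (∀ e ∈ T, e.card = 2) ∧
      (∀ s : Finset (Fin n), s.card = 3 → ∃ e ∈ T, e ⊆ s) ∧
      (∃ e : Finset (Fin n), e.card = 2 ∧ e ∉ T) ∧
      2 * (T.card : ℤ) = (n.choose 2 : ℤ) - b :=
  stmt8_general n b h1 h2 h3
end

section
/- If I is a quasi f-ideal of degree 2 and type (0,b) in k[x_1,...,x_n], then −C(n,2) + 2 ≤ b ≤ C(n,2) − 2N(n,2). -/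
/-- The edge set of `G` is upper perfect: every 3-element vertex subset spans an edge,
i.e. `G` has no independent set of size 3. -/
def upperPerfectEdges {n : ℕ} (G : SimpleGraph (Fin n)) : Prop :=
  ∀ s : Finset (Fin n), s.card = 3 → ∃ i ∈ s, ∃ j ∈ s, G.Adj i j

/-- The edge ideal of `G` is a quasi f-ideal of degree 2 and type `(0, b)`:
the facet complex (the graph `G`, with full vertex set since no vertex is isolated)
and the Stanley–Reisner (independence) complex are both 1-dimensional, their vertex
counts agree, and the difference of the numbers of 1-faces,
`(C(n,2) - |E(G)|) - |E(G)|`, equals `b`. -/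
def QuasiFTwo {n : ℕ} (G : SimpleGraph (Fin n)) [DecidableRel G.Adj] (b : ℤ) : Prop :=
  (∀ v, ∃ w, G.Adj v w) ∧
  upperPerfectEdges G ∧
  (∃ v w : Fin n, v ≠ w ∧ ¬ G.Adj v w) ∧
  ((n.choose 2 : ℤ) - G.edgeFinset.card) - G.edgeFinset.card = b

/-! Since `b = C(n,2) - 2|E(G)|`, it suffices to bound `|E(G)|`: it is at most `C(n,2) - 1`
because the complement of `G` has an edge, and at least `N(n,2)` because the edges of `G`,
read as 2-subsets, form a perfect family. -/

open Finset

namespace SimpleGraph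

variable {V : Type*} [Fintype V] {G : SimpleGraph V} [DecidableRel G.Adj]

theorem card_edgeFinset_lt_choose_two_of_not_adj {v w : V} (hvw : v ≠ w) (hnadj : ¬G.Adj v w) :
    #G.edgeFinset < (Fintype.card V).choose 2 := by
  classical
  have hG : G < ⊤ := lt_top_iff_ne_top.2 fun hG => hnadj (hG ▸ hvw)
  calc #G.edgeFinset < #(⊤ : SimpleGraph V).edgeFinset :=
        card_lt_card (edgeFinset_ssubset_edgeFinset.2 hG)
    _ = (Fintype.card V).choose 2 := card_edgeFinset_top_eq_card_choose_two

end SimpleGraph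

theorem perfectNum_le_card_edgeFinset {n : ℕ} (G : SimpleGraph (Fin n)) [DecidableRel G.Adj]
    (hcover : ∀ v, ∃ w, G.Adj v w) (hup : upperPerfectEdges G) :
    perfectNum n ≤ #G.edgeFinset := by
  refine le_trans ?_ (card_image_le (f := Sym2.toFinset))
  refine Nat.sInf_le ⟨G.edgeFinset.image Sym2.toFinset, ?_, ?_, ?_, rfl⟩
  · simp only [mem_image, SimpleGraph.mem_edgeFinset]
    rintro _ ⟨e, he, rfl⟩
    exact Sym2.card_toFinset_of_not_isDiag e (G.not_isDiag_of_mem_edgeSet he)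
  · intro s hs
    obtain ⟨i, hi, j, hj, hij⟩ := hup s hs
    refine ⟨s(i, j).toFinset, mem_image_of_mem _ (G.mem_edgeFinset.2 hij), ?_⟩
    simpa [Sym2.toFinset_mk_eq, insert_subset_iff] using ⟨hi, hj⟩
  · intro v
    obtain ⟨w, hvw⟩ := hcover v
    exact ⟨s(v, w).toFinset, mem_image_of_mem _ (G.mem_edgeFinset.2 hvw), by
      simp [Sym2.toFinset_mk_eq]⟩

/-- If `I` is a quasi f-ideal of degree 2 and type `(0,b)` in `n` variables,
then `-C(n,2) + 2 ≤ b ≤ C(n,2) - 2N(n,2)`. -/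
theorem stmt9 {n : ℕ} (G : SimpleGraph (Fin n)) [DecidableRel G.Adj] (b : ℤ)
    (h : QuasiFTwo G b) :
    -(n.choose 2 : ℤ) + 2 ≤ b ∧ b ≤ (n.choose 2 : ℤ) - 2 * perfectNum n := by
  obtain ⟨hcover, hup, ⟨v, w, hvw, hnadj⟩, rfl⟩ := h
  have hlt := SimpleGraph.card_edgeFinset_lt_choose_two_of_not_adj hvw hnadj
  have hperf := perfectNum_le_card_edgeFinset G hcover hup
  rw [Fintype.card_fin] at hlt
  constructor <;> omega
end
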